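/- Central Sets Theorem with countably many sequences: let (S,+) be a countable commutative semigroup, let A be central in S, and for each l ∈ ℕ let ⟨y_{l,n}⟩_{n=1}^∞ be a sequence in S. Then there exist a sequence ⟨a_n⟩ in S and a sequence ⟨H_n⟩ in P_f(ℕ) with max H_n < min H_{n+1} for each n, such that for every f : ℕ → ℕ with f(n) ≤ n for all n, all finite sums FS(⟨a_n + ∑_{t∈H_n} y_{f(n),t}⟩_{n=1}^∞) are contained in A. -/

import Mathlib

/-- Fold of addition along a list, starting from `a` (no identity needed). -/
def addChain {S : Type*} [Add S] : S → List S → S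
  | a, [] => a
  | a, b :: l => addChain (a + b) l

/-- The sum `∑ t ∈ H, f t` in an additive commutative semigroup (junk value `f 0`
for `H = ∅`; we only use it for nonempty `H`). -/
def finSum {S : Type*} [AddCommSemigroup S] (f : ℕ → S) (H : Finset ℕ) : S :=
  match H.sort (· ≤ ·) with
  | [] => f 0
  | a :: l => addChain (f a) (l.map f)

def AddThick {S : Type*} [AddCommSemigroup S] (A : Set S) : Prop :=
  ∀ E : Finset S, E.Nonempty → ∃ x : S, ∀ e ∈ E, e + x ∈ A

def AddPiecewiseSyndetic {S : Type*} [AddCommSemigroup S] (A : Set S) : Prop :=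
  ∃ F : Finset S, F.Nonempty ∧ AddThick {s : S | ∃ t ∈ F, t + s ∈ A}

/-- Combinatorial characterization of central sets. -/
def AddCentral {S : Type*} [AddCommSemigroup S] (A : Set S) : Prop :=
  ∃ C : ℕ → Set S, (∀ n, C n ⊆ A) ∧ (∀ n, C (n + 1) ⊆ C n) ∧
    (∀ n, AddPiecewiseSyndetic (C n)) ∧
    (∀ n, ∀ x ∈ C n, ∃ m, C m ⊆ {s : S | x + s ∈ C n})

/-!
Only `C 0` matters for the target set. Every `x ∈ C 0` has some `C m ⊆ -x + C 0`, and since the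
`C m` decrease, a single `m` serves finitely many `x` at once. The blocks are therefore built one
at a time, keeping the finite set `P` of all finite sums of terms chosen so far inside `C 0`. Take
an `m` that works for all of `P`. Then piecewise syndeticity of `C m`, combined with the
Hales–Jewett theorem, gives `a` and a block `H` beyond the previous ones with
`a + ∑_{t ∈ H} y_i(t) ∈ C m` for all `i ≤ n`. So every new finite sum lies in `C 0` again.
-/

open Finset

theorem exists_seq_of_forall_exists_succ {σ : Type*} (p : ℕ → σ → Prop)
    (r : ℕ → σ → σ → Prop) (h₀ : ∃ s, p 0 s)
    (h : ∀ n s, p n s → ∃ s', p (n + 1) s' ∧ r n s s') :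
    ∃ u : ℕ → σ, ∀ n, p n (u n) ∧ r n (u n) (u (n + 1)) := by
  choose s₀ hs₀ using h₀
  choose next hnext using h
  let v : (n : ℕ) → {s // p n s} :=
    fun n => Nat.rec ⟨s₀, hs₀⟩ (fun n s => ⟨next n s s.2, (hnext n s s.2).1⟩) n
  refine ⟨fun n => (v n).1, fun n => ⟨(v n).2, ?_⟩⟩
  exact (hnext n (v n).1 (v n).2).2

theorem Combinatorics.Line.sum_apply {α ι M : Type*} [Fintype ι] [AddCommMonoid M]
    (l : Combinatorics.Line α ι) (g : α → ι → M) (x : α) :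
    ∑ i, g (l x i) i =
      ∑ i with l.idxFun i = none, g x i + ∑ i, (l.idxFun i).elim 0 (g · i) := by
  rw [sum_filter, ← sum_add_distrib]
  refine sum_congr rfl fun i _ => ?_
  cases h : l.idxFun i <;> simp [h]

section AddCommSemigroup

variable {S : Type*} [AddCommSemigroup S]

theorem WithZero.exists_coe_add_eq (a : S) (b : WithZero S) :
    ∃ c : S, (a : WithZero S) + b = c := by
  induction b using WithZero.recZeroCoe with
  | zero => exact ⟨a, add_zero _⟩
  | coe b => exact ⟨a + b, rfl⟩

theorem WithZero.exists_sum_coe_eq {ι : Type*} {s : Finset ι} (hs : s.Nonempty) (f : ι → S) :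
    ∃ c : S, ∑ i ∈ s, (f i : WithZero S) = c := by
  induction hs using Finset.Nonempty.cons_induction with
  | singleton i => exact ⟨f i, sum_singleton _ _⟩
  | cons i s hi _ ih =>
    obtain ⟨c, hc⟩ := ih
    exact ⟨f i + c, by rw [sum_cons, hc, WithZero.coe_add]⟩

theorem coe_addChain (a : S) (l : List S) :
    ((addChain a l : S) : WithZero S) = a + (l.map ((↑) : S → WithZero S)).sum := by
  induction l generalizing a with
  | nil => simp [addChain]
  | cons b l ih => simp [addChain, ih, add_assoc]

theorem coe_finSum (f : ℕ → S) {H : Finset ℕ} (hH : H.Nonempty) :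
    ((finSum f H : S) : WithZero S) = ∑ t ∈ H, (f t : WithZero S) := by
  have hsum : ∑ t ∈ H, (f t : WithZero S) =
      ((H.sort (· ≤ ·)).map fun t => (f t : WithZero S)).sum := by
    rw [Finset.sum, ← Finset.sort_eq H (· ≤ ·), Multiset.map_coe, Multiset.sum_coe]
  rw [hsum, finSum]
  rcases hsort : H.sort (· ≤ ·) with _ | ⟨t, l⟩
  · simpa [hsort] using (Finset.mem_sort (· ≤ ·)).2 hH.choose_spec
  · simp [coe_addChain, Function.comp_def]

theorem finSum_singleton (f : ℕ → S) (t : ℕ) : finSum f {t} = f t := by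
  rw [← WithZero.coe_inj, coe_finSum _ (singleton_nonempty t), sum_singleton]

theorem finSum_insert (f : ℕ → S) {t : ℕ} {H : Finset ℕ} (ht : t ∉ H) (hH : H.Nonempty) :
    finSum f (insert t H) = finSum f H + f t := by
  rw [← WithZero.coe_inj, coe_finSum _ (insert_nonempty t H), sum_insert ht, WithZero.coe_add,
    coe_finSum _ hH, add_comm]

/-- Hales–Jewett: colour each word `w` by a `t ∈ F` with `t + (∑_i y_{w i}(pos i) + x) ∈ C`.
Along a monochromatic line the free coordinates give `H` and the fixed ones are absorbed
into `a`; their sum is taken in `WithZero S`, since there may be none. -/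
theorem AddPiecewiseSyndetic.exists_add_finSum_mem {C : Set S} (hC : AddPiecewiseSyndetic C)
    {α : Type*} [Finite α] [Nonempty α] (y : α → ℕ → S) (b : ℕ) :
    ∃ (a : S) (H : Finset ℕ), H.Nonempty ∧ (∀ t ∈ H, b < t) ∧
      ∀ v, a + finSum (y v) H ∈ C := by
  classical
  have := Fintype.ofFinite α
  obtain ⟨F, hF, hthick⟩ := hC
  obtain ⟨ι, _, hHJ⟩ := Combinatorics.Line.exists_mono_in_high_dimension α F
  have : Nonempty ι := ⟨(hHJ fun _ => ⟨_, hF.choose_spec⟩).choose.proper.choose⟩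
  let pos : ι ↪ ℕ := (Fintype.equivFin ι).toEmbedding.trans
    (Fin.valEmbedding.trans (addLeftEmbedding (b + 1)))
  have hpos (i : ι) : b < pos i := by simp [pos]; omega
  have hword (w : ι → α) : ∃ s : S, ∑ i, (y (w i) (pos i) : WithZero S) = s :=
    WithZero.exists_sum_coe_eq univ_nonempty _
  choose σ hσ using hword
  obtain ⟨x, hx⟩ := hthick (univ.image σ) (univ_nonempty.image σ)
  have hcol (w : ι → α) : ∃ t : F, (t : S) + (σ w + x) ∈ C := by
    obtain ⟨t, ht, htC⟩ := hx (σ w) (mem_image_of_mem _ (mem_univ w))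
    exact ⟨⟨t, ht⟩, htC⟩
  choose col hcol using hcol
  obtain ⟨l, c, hl⟩ := hHJ col
  obtain ⟨a, ha⟩ := WithZero.exists_coe_add_eq ((c : S) + x)
    (∑ i, (l.idxFun i).elim 0 fun v => (y v (pos i) : WithZero S))
  have hne : ({i | l.idxFun i = none} : Finset ι).Nonempty := by
    obtain ⟨i, hi⟩ := l.proper
    exact ⟨i, by simp [hi]⟩
  refine ⟨a, (univ.filter (l.idxFun · = none)).map pos, hne.map, ?_, fun v => ?_⟩
  · simp only [mem_map]
    rintro _ ⟨i, -, rfl⟩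
    exact hpos i
  convert hl v ▸ hcol (l v) using 1
  rw [← WithZero.coe_inj, WithZero.coe_add, coe_finSum _ hne.map, sum_map, ← ha]
  simp only [WithZero.coe_add]
  rw [← hσ, Combinatorics.Line.sum_apply l (fun v i => (y v (pos i) : WithZero S))]
  abel

end AddCommSemigroup

namespace CentralSets
open scoped Pointwise
variable {S : Type*} [AddCommSemigroup S]

/-- The finite sums over `{0, …, n}` are those over `{0, …, n - 1}` (`P`), the new terms (`G`),
and their sums. -/
def extendSums (P G : Set S) : Set S := P ∪ G ∪ (P + G)

theorem finite_extendSums {P G : Set S} (hP : P.Finite) (hG : G.Finite) :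
    (extendSums P G).Finite :=
  (hP.union hG).union (hP.add hG)

theorem finSum_mem_of_extendSums_subset {P G : ℕ → Set S}
    (hPG : ∀ n, extendSums (P n) (G n) ⊆ P (n + 1)) {g : ℕ → S} (hg : ∀ n, g n ∈ G n)
    {F : Finset ℕ} (hF : F.Nonempty) : finSum g F ∈ P (F.max' hF + 1) := by
  have hmono : Monotone P := monotone_nat_of_le_succ fun n x hx => hPG n (.inl (.inl hx))
  induction F using Finset.induction_on_max with
  | empty => exact absurd hF Finset.not_nonempty_empty
  | insert t F hlt ih =>
    rcases F.eq_empty_or_nonempty with rfl | hF'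
    · simp only [insert_empty, max'_singleton, finSum_singleton]
      exact hPG t (.inl (.inr (hg t)))
    · have hFt : F.max' hF' < t := hlt _ (F.max'_mem hF')
      rw [max'_insert t F hF', max_eq_left hFt.le,
        finSum_insert g (fun ht => (hlt t ht).false) hF']
      exact hPG t (.inr (Set.add_mem_add (hmono hFt (ih hF')) (hg t)))

/-- The candidates `a + ∑_{t ∈ H} y_i(t)` for the `n`-th term, one for each `i = f n ≤ n`. -/
def blockSums (y : ℕ → ℕ → S) (n : ℕ) (a : S) (H : Finset ℕ) : Set S :=
  (fun i => a + finSum (y i) H) '' Set.Iic n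

theorem finite_blockSums (y : ℕ → ℕ → S) (n : ℕ) (a : S) (H : Finset ℕ) :
    (blockSums y n a H).Finite :=
  (Set.finite_Iic n).image _

section Construction

variable {C : ℕ → Set S}

theorem exists_subset_add_mem_of_finite {B : Set S} (hC : Antitone C) {P : Set S}
    (hP : P.Finite) (hPB : ∀ x ∈ P, ∃ m, C m ⊆ {s | x + s ∈ B}) :
    ∃ m, ∀ x ∈ P, C m ⊆ {s | x + s ∈ B} := by
  have hev : ∀ x ∈ P, ∀ᶠ m in Filter.atTop, C m ⊆ {s | x + s ∈ B} := fun x hx =>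
    let ⟨m, hm⟩ := hPB x hx
    Filter.eventually_atTop.2 ⟨m, fun _ hm' => (hC hm').trans hm⟩
  exact ((Filter.eventually_all_finite hP).2 hev).exists

variable (hC : Antitone C) (hpws : ∀ m, AddPiecewiseSyndetic (C m))
  (hstar : ∀ x ∈ C 0, ∃ m, C m ⊆ {s | x + s ∈ C 0})
include hC hpws hstar

theorem exists_extendSums_blockSums_subset (y : ℕ → ℕ → S) (n b : ℕ) {P : Set S}
    (hP : P.Finite) (hPC : P ⊆ C 0) :
    ∃ (a : S) (H : Finset ℕ), H.Nonempty ∧ (∀ t ∈ H, b < t) ∧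
      extendSums P (blockSums y n a H) ⊆ C 0 := by
  obtain ⟨m, hm⟩ := exists_subset_add_mem_of_finite hC hP fun x hx => hstar x (hPC hx)
  obtain ⟨a, H, hH, hb, hmem⟩ :=
    (hpws m).exists_add_finSum_mem (fun v : Fin (n + 1) => y v) b
  have hG : blockSums y n a H ⊆ C m := by
    rintro _ ⟨i, hi, rfl⟩
    exact hmem ⟨i, Nat.lt_succ_of_le hi⟩
  refine ⟨a, H, hH, hb, ?_⟩
  rintro _ ((hz | hz) | ⟨x, hx, z, hz, rfl⟩)
  · exact hPC hz
  · exact hC (Nat.zero_le m) (hG hz)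
  · exact hm x hx (hG hz)

theorem exists_blocks_finSum_mem (y : ℕ → ℕ → S) :
    ∃ (a : ℕ → S) (H : ℕ → Finset ℕ), (∀ n, (H n).Nonempty) ∧
      (∀ n, ∀ s ∈ H n, ∀ t ∈ H (n + 1), s < t) ∧
      ∀ g : ℕ → S, (∀ n, g n ∈ blockSums y n (a n) (H n)) →
        ∀ F : Finset ℕ, F.Nonempty → finSum g F ∈ C 0 := by
  -- the state at stage `n` is the set `P` of finite sums of the terms before `n`, and the
  -- `n`-th block `(a, H)`
  obtain ⟨u, hu⟩ := exists_seq_of_forall_exists_succ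
    (fun n (q : Set S × S × Finset ℕ) => q.1.Finite ∧ q.2.2.Nonempty ∧
      extendSums q.1 (blockSums y n q.2.1 q.2.2) ⊆ C 0)
    (fun n q q' => q'.1 = extendSums q.1 (blockSums y n q.2.1 q.2.2) ∧
      ∀ s ∈ q.2.2, ∀ t ∈ q'.2.2, s < t)
    (by
      obtain ⟨a, H, hH, -, hsub⟩ := exists_extendSums_blockSums_subset hC hpws hstar y 0 0
        Set.finite_empty (Set.empty_subset _)
      exact ⟨(∅, a, H), Set.finite_empty, hH, hsub⟩)
    (by
      rintro n ⟨P, a, H⟩ ⟨hP, -, hsub⟩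
      have hP' := finite_extendSums hP (finite_blockSums y n a H)
      obtain ⟨a', H', hH', hb, hsub'⟩ :=
        exists_extendSums_blockSums_subset hC hpws hstar y (n + 1) (H.sup id) hP' hsub
      exact ⟨(_, a', H'), ⟨hP', hH', hsub'⟩, rfl,
        fun s hs t ht => (le_sup (f := id) hs).trans_lt (hb t ht)⟩)
  refine ⟨fun n => (u n).2.1, fun n => (u n).2.2, fun n => (hu n).1.2.1, fun n => (hu n).2.2,
    fun g hg F hF => ?_⟩
  have hmem := finSum_mem_of_extendSums_subset (P := fun n => (u n).1)
    (fun n => (hu n).2.1.ge) hg hF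
  rw [(hu _).2.1] at hmem
  exact (hu _).1.2.2 hmem

end Construction

end CentralSets

theorem centralSetsTheorem_countably_many_sequences_general {S : Type*} [AddCommSemigroup S]
    (A : Set S) (hA : AddCentral A) (y : ℕ → ℕ → S) :
    ∃ (a : ℕ → S) (H : ℕ → Finset ℕ),
      (∀ n, (H n).Nonempty) ∧
      (∀ n, ∀ s ∈ H n, ∀ t ∈ H (n + 1), s < t) ∧
      (∀ f : ℕ → ℕ, (∀ n, f n ≤ n) → ∀ F : Finset ℕ, F.Nonempty →
        finSum (fun n => a n + finSum (y (f n)) (H n)) F ∈ A) := by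
  obtain ⟨C, hCA, hCdec, hCpws, hCstar⟩ := hA
  obtain ⟨a, H, hH, hlt, hmem⟩ :=
    CentralSets.exists_blocks_finSum_mem (antitone_nat_of_succ_le hCdec) hCpws (hCstar 0) y
  exact ⟨a, H, hH, hlt, fun f hf F hF => hCA 0 (hmem _ (fun n => ⟨f n, hf n, rfl⟩) F hF)⟩

/-- Central Sets Theorem with countably many sequences: all finite sums
`FS(⟨a_n + ∑_{t ∈ H_n} y_{f(n),t}⟩)` land in `A`, for every choice function `f` with
`f(n) ≤ n`. -/
theorem centralSetsTheorem_countably_many_sequences {S : Type*} [AddCommSemigroup S]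
    [Countable S] (A : Set S) (hA : AddCentral A) (y : ℕ → ℕ → S) :
    ∃ (a : ℕ → S) (H : ℕ → Finset ℕ),
      (∀ n, (H n).Nonempty) ∧
      (∀ n, ∀ s ∈ H n, ∀ t ∈ H (n + 1), s < t) ∧
      (∀ f : ℕ → ℕ, (∀ n, f n ≤ n) → ∀ F : Finset ℕ, F.Nonempty →
        finSum (fun n => a n + finSum (y (f n)) (H n)) F ∈ A) :=
  centralSetsTheorem_countably_many_sequences_general A hA y
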